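/- arXiv:2207.06653 — 5 statements merged into one kernel-verified Lean document; each statement's English description precedes it below -/
import Mathlib

section
/- Suppose ε > 0 is small, k > 0, and let ρ(x) = ε/log²(15x/k) for x ≥ k/5 and ρ(x) = 0 otherwise. Let G be an n-vertex (ε, k)-robust-expander with k < n/10 and average degree d. Then for every W ⊆ V(G) with |W| ≤ (1/20)·ρ(n)·n, the graph G − W has average degree at least (1/20)·ρ(n)·d. -/
open Finset SimpleGraph
open scoped Classical

variable {V : Type*}

/-- Number of ordered adjacent pairs inside `S` (= sum of degrees in the induced subgraph). -/
noncomputable def degSum [Fintype V] (G : SimpleGraph V) (S : Finset V) : ℕ :=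
  ((S ×ˢ S).filter fun p => G.Adj p.1 p.2).card

/-- Average degree of the subgraph of `G` induced on `S`. -/
noncomputable def avgDegOn [Fintype V] (G : SimpleGraph V) (S : Finset V) : ℝ :=
  (degSum G S : ℝ) / (S.card : ℝ)

/-- Average degree of `G`. -/
noncomputable def avgDeg [Fintype V] (G : SimpleGraph V) : ℝ :=
  avgDegOn G Finset.univ

/-- `cruxSize α G` is the minimum order of a subgraph of `G` with average degree at least
`α · d(G)` (equivalently, of a vertex set inducing such a subgraph). -/
noncomputable def cruxSize [Fintype V] (α : ℝ) (G : SimpleGraph V) : ℕ :=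
  sInf {m | ∃ S : Finset V, S.card = m ∧ α * avgDeg G ≤ avgDegOn G S}

/-- Number of edges between `S` and its complement (counted as ordered pairs from `S` out). -/
noncomputable def crossPairs [Fintype V] (G : SimpleGraph V) (S : Finset V) : ℕ :=
  ((S ×ˢ Sᶜ).filter fun p => G.Adj p.1 p.2).card

/-- External neighbourhood of `A` in the graph `G − D`. -/
noncomputable def nbhdIn [Fintype V] (G : SimpleGraph V) (D A : Finset V) : Finset V :=
  Finset.univ.filter fun v => v ∉ D ∧ v ∉ A ∧ ∃ u ∈ A, G.Adj u v

/-- Ball of radius `r` around `A` in the graph `G − D`. -/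
noncomputable def ballIn [Fintype V] (G : SimpleGraph V) (D A : Finset V) : ℕ → Finset V
  | 0 => A
  | r + 1 => ballIn G D A r ∪ nbhdIn G D (ballIn G D A r)

/-- `G` has the `(a, b, ρ)`-expansion-property. -/
def ExpansionProperty [Fintype V] (G : SimpleGraph V) (a b ρ : ℝ) : Prop :=
  ∀ X : Finset V, a ≤ (X.card : ℝ) → (X.card : ℝ) ≤ b →
    ρ * (X.card : ℝ) ≤ ((nbhdIn G ∅ X).card : ℝ)

/-- The Komlós–Szemerédi expansion rate function. -/
noncomputable def rho (ε k x : ℝ) : ℝ :=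
  if k / 5 ≤ x then ε / (Real.log (15 * x / k)) ^ 2 else 0

/-- `(ε, k)`-robust-expander. -/
def RobustExpander [Fintype V] (G : SimpleGraph V) (ε k : ℝ) : Prop :=
  ∀ X : Finset V, k / 2 ≤ (X.card : ℝ) → (X.card : ℝ) ≤ (Fintype.card V : ℝ) / 2 →
    ∀ F : Finset (Sym2 V), ↑F ⊆ G.edgeSet →
      (F.card : ℝ) ≤ avgDeg G * rho ε k (X.card : ℝ) * (X.card : ℝ) →
      rho ε k (X.card : ℝ) * (X.card : ℝ) ≤ ((nbhdIn (G.deleteEdges ↑F) ∅ X).card : ℝ)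

/-- `G` contains a subdivision of the graph `H` (on vertex set `Fin t`): there are `t` distinct
core vertices and internally vertex-disjoint paths for the edges of `H`, whose internal
vertices avoid the cores. -/
def ContainsSubdivision {t : ℕ} (H : SimpleGraph (Fin t)) (G : SimpleGraph V) : Prop :=
  ∃ c : Fin t ↪ V, ∃ p : ∀ i j : Fin t, i < j → H.Adj i j → G.Walk (c i) (c j),
    (∀ i j (h : i < j) (ha : H.Adj i j), (p i j h ha).IsPath) ∧
    (∀ i j (h : i < j) (ha : H.Adj i j) (k : Fin t),
        c k ∈ (p i j h ha).support → k = i ∨ k = j) ∧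
    (∀ i j (h : i < j) (ha : H.Adj i j) i' j' (h' : i' < j') (ha' : H.Adj i' j'),
        (i, j) ≠ (i', j') →
        Disjoint ((p i j h ha).support.toFinset \ {c i, c j})
          ((p i' j' h' ha').support.toFinset \ {c i', c j'}))

/-- `G` contains a copy of `H` as a subgraph. -/
def ContainsCopy {W₀ : Type*} (H : SimpleGraph W₀) (G : SimpleGraph V) : Prop :=
  ∃ f : W₀ → V, Function.Injective f ∧ ∀ a b, H.Adj a b → G.Adj (f a) (f b)

/-- Clique number of `G`. -/
noncomputable def cliqueNumber [Fintype V] (G : SimpleGraph V) : ℕ :=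
  sSup {n | ∃ s : Finset V, G.IsNClique n s}

/-! If `G − W` had average degree below `ρ(n) d / 20`, then deleting the few edges inside `Wᶜ`
would be a legal attack on a half-size set `X ⊆ Wᶜ`. Afterwards every external neighbour of `X`
lies in `W`, so `ρ(|X|)|X| ≤ |W| ≤ ρ(n) n / 20`, which is impossible because `ρ` is decreasing
and `|X| ≈ n / 2`. -/

lemma one_lt_log_fifteen_mul_div {k x : ℝ} (hk : 0 < k) (hx : k / 5 ≤ x) :
    1 < Real.log (15 * x / k) := by
  have h3 : (3 : ℝ) ≤ 15 * x / k := by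
    rw [le_div_iff₀ hk]; linarith
  calc (1 : ℝ) < Real.log 3 :=
        (Real.lt_log_iff_exp_lt (by norm_num)).2 (Real.exp_one_lt_d9.trans_le (by norm_num))
    _ ≤ _ := Real.log_le_log (by norm_num) h3

lemma rho_pos {ε k x : ℝ} (hε : 0 < ε) (hk : 0 < k) (hx : k / 5 ≤ x) : 0 < rho ε k x := by
  have h := one_lt_log_fifteen_mul_div hk hx
  rw [rho, if_pos hx]
  exact div_pos hε (by nlinarith)

lemma rho_le_one {ε k x : ℝ} (hε : ε ≤ 1) (hk : 0 < k) (hx : k / 5 ≤ x) : rho ε k x ≤ 1 := by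
  have h := one_lt_log_fifteen_mul_div hk hx
  rw [rho, if_pos hx, div_le_one (by nlinarith)]
  nlinarith

lemma rho_antitoneOn {ε k : ℝ} (hε : 0 ≤ ε) (hk : 0 < k) :
    AntitoneOn (rho ε k) (Set.Ici (k / 5)) := by
  intro x hx y hy hxy
  have h1 := one_lt_log_fifteen_mul_div hk hx
  have h2 : Real.log (15 * x / k) ≤ Real.log (15 * y / k) :=
    Real.log_le_log (div_pos (by linarith [Set.mem_Ici.1 hx]) hk) (by gcongr)
  rw [rho, rho, if_pos (Set.mem_Ici.1 hx), if_pos (Set.mem_Ici.1 hy)]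
  exact div_le_div_of_nonneg_left hε (by nlinarith) (by nlinarith)

lemma rho_mul_div_twenty_lt_rho_half_mul {ε k : ℝ} {n : ℕ} (hε : 0 < ε) (hk : 0 < k)
    (hn : 2 ≤ n) (hkn : k < n / 10) :
    rho ε k n * n / 20 < rho ε k ↑(n / 2) * ↑(n / 2) := by
  have hnR : (2 : ℝ) ≤ n := by exact_mod_cast hn
  have hhalf : ((n : ℝ) - 1) / 2 ≤ ↑(n / 2) := by
    have : (n : ℝ) ≤ 2 * ↑(n / 2) + 1 := by exact_mod_cast (by omega : n ≤ 2 * (n / 2) + 1)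
    linarith
  have hρ_pos := rho_pos hε hk (show k / 5 ≤ (n : ℝ) by linarith)
  have hρ_anti : rho ε k n ≤ rho ε k ↑(n / 2) :=
    rho_antitoneOn hε.le hk (show k / 5 ≤ (↑(n / 2) : ℝ) by linarith) (Set.mem_Ici.2 (by linarith))
      (by exact_mod_cast Nat.div_le_self n 2)
  calc rho ε k n * n / 20 < rho ε k n * (((n : ℝ) - 1) / 2) := by nlinarith
    _ ≤ rho ε k ↑(n / 2) * ↑(n / 2) :=
      mul_le_mul hρ_anti hhalf (by linarith) (hρ_pos.le.trans hρ_anti)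

lemma avgDegOn_nonneg [Fintype V] (G : SimpleGraph V) (S : Finset V) : 0 ≤ avgDegOn G S := by
  unfold avgDegOn; positivity

noncomputable def edgesInside (G : SimpleGraph V) (S : Finset V) : Finset (Sym2 V) :=
  ((S ×ˢ S).filter fun p => G.Adj p.1 p.2).image fun p => s(p.1, p.2)

lemma mem_edgesInside {G : SimpleGraph V} {S : Finset V} {u v : V} (hu : u ∈ S) (hv : v ∈ S)
    (huv : G.Adj u v) : s(u, v) ∈ edgesInside G S :=
  mem_image.2 ⟨(u, v), mem_filter.2 ⟨mem_product.2 ⟨hu, hv⟩, huv⟩, rfl⟩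

lemma coe_edgesInside_subset (G : SimpleGraph V) (S : Finset V) :
    ↑(edgesInside G S) ⊆ G.edgeSet := by
  intro e he
  obtain ⟨⟨u, v⟩, huv, rfl⟩ := mem_image.1 he
  exact (mem_filter.1 huv).2

lemma card_edgesInside_le_degSum [Fintype V] (G : SimpleGraph V) (S : Finset V) :
    (edgesInside G S).card ≤ degSum G S :=
  card_image_le

lemma nbhdIn_deleteEdges_edgesInside_subset [Fintype V] {G : SimpleGraph V} {S X : Finset V}
    (hXS : X ⊆ S) : nbhdIn (G.deleteEdges ↑(edgesInside G S)) ∅ X ⊆ Sᶜ := by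
  intro v hv
  simp only [nbhdIn, mem_filter, mem_univ, true_and] at hv
  obtain ⟨-, -, u, huX, huv⟩ := hv
  rw [deleteEdges_adj] at huv
  exact mem_compl.2 fun hvS => huv.2 (mem_edgesInside (hXS huX) hvS huv.1)

lemma RobustExpander.rho_mul_card_le_card_compl [Fintype V] {G : SimpleGraph V} {ε k : ℝ}
    (hG : RobustExpander G ε k) {S X : Finset V} (hXS : X ⊆ S) (hkX : k / 2 ≤ (X.card : ℝ))
    (hXn : (X.card : ℝ) ≤ (Fintype.card V : ℝ) / 2)
    (hS : (degSum G S : ℝ) ≤ avgDeg G * rho ε k X.card * X.card) :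
    rho ε k X.card * X.card ≤ (Sᶜ.card : ℝ) := by
  have hF : ((edgesInside G S).card : ℝ) ≤ avgDeg G * rho ε k X.card * X.card :=
    le_trans (by exact_mod_cast card_edgesInside_le_degSum G S) hS
  refine (hG X hkX hXn _ (coe_edgesInside_subset G S) hF).trans ?_
  exact_mod_cast card_le_card (nbhdIn_deleteEdges_edgesInside_subset hXS)

/-- in a sufficiently large `(ε, k)`-robust-expander with `k < n/10`, removing any
`W` with `|W| ≤ (1/20)ρ(n)n` leaves a graph of average degree at least `(1/20)ρ(n)d`. -/
theorem statement_3 :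
    ∀ ε : ℝ, 0 < ε → ε < 1 →
      ∃ n₀ : ℕ, ∀ (V : Type) [Fintype V], ∀ (G : SimpleGraph V) (k : ℝ), 0 < k →
        n₀ ≤ Fintype.card V → k < (Fintype.card V : ℝ) / 10 →
        RobustExpander G ε k →
        ∀ W : Finset V,
          (W.card : ℝ) ≤ 1 / 20 * rho ε k (Fintype.card V : ℝ) * (Fintype.card V : ℝ) →
          1 / 20 * rho ε k (Fintype.card V : ℝ) * avgDeg G ≤ avgDegOn G Wᶜ := by
  intro ε hε hε1
  refine ⟨2, fun V _ G k hk hn hkn hG W hW => ?_⟩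
  set n := Fintype.card V
  have hnR : (2 : ℝ) ≤ n := by exact_mod_cast hn
  have hkn5 : k / 5 ≤ (n : ℝ) := by linarith
  have hρ_pos := rho_pos hε hk hkn5
  have hρ_le_one := rho_le_one hε1.le hk hkn5
  have hd : 0 ≤ avgDeg G := avgDegOn_nonneg G univ
  have hW20 : 20 * W.card ≤ n := by
    have : (20 * W.card : ℝ) ≤ n := by nlinarith
    exact_mod_cast this
  obtain ⟨X, hXW, hX⟩ := exists_subset_card_eq (s := Wᶜ) (n := n / 2) (by rw [card_compl]; omega)
  have hXn : rho ε k n * n / 20 < rho ε k X.card * X.card :=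
    hX ▸ rho_mul_div_twenty_lt_rho_half_mul hε hk hn hkn
  by_contra! hsparse
  have hWc : 0 < (Wᶜ.card : ℝ) := by
    have : 0 < Wᶜ.card := by rw [card_compl]; omega
    exact_mod_cast this
  have hWcn : (Wᶜ.card : ℝ) ≤ n := by exact_mod_cast card_le_univ Wᶜ
  have hsum : (degSum G Wᶜ : ℝ) ≤ avgDeg G * rho ε k X.card * X.card := by
    rw [avgDegOn, div_lt_iff₀ hWc] at hsparse
    have hρd : 0 ≤ rho ε k n * avgDeg G := by positivity
    nlinarith [mul_le_mul_of_nonneg_left hXn.le hd, mul_le_mul_of_nonneg_left hWcn hρd]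
  have hhalf : (n : ℝ) ≤ 2 * ↑(n / 2) + 1 := by exact_mod_cast (by omega : n ≤ 2 * (n / 2) + 1)
  have hW_large := hG.rho_mul_card_le_card_compl hXW
    (by rw [hX]; linarith) (by rw [hX]; exact Nat.cast_div_le) hsum
  rw [compl_compl] at hW_large
  linarith
end

section
/- Let a, b, q, k be positive integers and x a real number with a ≤ kx ≤ b/(3(1+ρ/4)), and let G be an n-vertex graph with the (a, b, ρ)-expansion-property. Suppose W, W_1, …, W_q, A_1, …, A_q ⊆ V(G) satisfy: |W| ≤ (ρkx)/2; for each i, |A_i| ≥ x, |W_i| ≤ ρx/4, and A_i is disjoint from W_i and from W; and for each I ⊆ [q] with k ≤ |I| ≤ 3k, |⋃_{i∈I} A_i| ≥ |I|·x. Then there exists J ⊆ [q] with |J| ≥ q − k such that: (1) for each j ∈ J, |B¹_{G−(W∪W_j)}(A_j)| ≥ (1+ρ/4)·x; and (2) for each I ⊆ J with k ≤ |I| ≤ 3k, |⋃_{i∈I} B¹_{G−(W∪W_i)}(A_i)| ≥ (1+ρ/4)·|I|·x. -/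
open Finset SimpleGraph
open scoped Classical

variable {V : Type*}

/-
Let `X = ⋃_{i ∈ I} A_i` and `B_i = B¹_{G−(W∪W_i)}(A_i)`. Every external neighbour of `X` lies in
`W`, in some `W_i`, or in `B_i`, so `|X| + |N(X)| ≤ |⋃ B_i| + |W| + ∑ |W_i|`. When `X` lies in the
expansion range, `|N(X)| ≥ ρ|X|` while `|W| + ∑ |W_i| ≤ (3/4)ρ|I|x ≤ (3/4)ρ|X|`, whence
`|⋃ B_i| ≥ (1 + ρ/4)|X|`; if `X` is too large for the expansion property, `X ⊆ ⋃ B_i` suffices.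
This gives (2) for every `I` with `k ≤ |I| ≤ 3k`, and applied to `k` indices with small balls it
contradicts `|⋃ B_i| ≤ ∑ |B_i|`; so fewer than `k` indices fail (1).
-/

theorem Finset.card_sub_le_card_filter_of_forall_card_eq {ι : Type*} [Fintype ι] (p : ι → Prop)
    [DecidablePred p] (k : ℕ) (h : ∀ I : Finset ι, #I = k → ∃ i ∈ I, p i) :
    Fintype.card ι - k ≤ #(univ.filter p) := by
  have hbad : #(univ.filter fun i => ¬p i) < k := by
    by_contra! hk
    obtain ⟨I, hIsub, hIcard⟩ := exists_subset_card_eq hk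
    obtain ⟨i, hi, hpi⟩ := h I hIcard
    exact (mem_filter.1 (hIsub hi)).2 hpi
  have hsplit := card_filter_add_card_filter_not (s := univ) p
  rw [card_univ] at hsplit
  omega

theorem Finset.cast_card_biUnion_lt_card_mul {ι β : Type*} [DecidableEq β] {I : Finset ι}
    {t : ι → Finset β} {c : ℝ} (hI : I.Nonempty) (h : ∀ i ∈ I, (#(t i) : ℝ) < c) :
    (#(I.biUnion t) : ℝ) < #I * c :=
  calc (#(I.biUnion t) : ℝ) ≤ ∑ i ∈ I, (#(t i) : ℝ) := by exact_mod_cast card_biUnion_le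
    _ < ∑ _i ∈ I, c := sum_lt_sum_of_nonempty hI h
    _ = #I * c := by simp

section Balls

variable [Fintype V] {G : SimpleGraph V}

@[simp]
theorem mem_nbhdIn {D A : Finset V} {v : V} :
    v ∈ nbhdIn G D A ↔ v ∉ D ∧ v ∉ A ∧ ∃ u ∈ A, G.Adj u v := by
  simp [nbhdIn]

theorem disjoint_nbhdIn (D A : Finset V) : Disjoint A (nbhdIn G D A) :=
  disjoint_left.2 fun _ hv hvN => (mem_nbhdIn.1 hvN).2.1 hv

theorem ballIn_one (D A : Finset V) : ballIn G D A 1 = A ∪ nbhdIn G D A := rfl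

theorem subset_ballIn_one (D A : Finset V) : A ⊆ ballIn G D A 1 := by
  rw [ballIn_one]
  exact subset_union_left

variable {ι : Type*} (W : Finset V) (Wi Ai : ι → Finset V) (I : Finset ι)

theorem nbhdIn_biUnion_sdiff_subset :
    nbhdIn G ∅ (I.biUnion Ai) \ (W ∪ I.biUnion Wi) ⊆
      I.biUnion fun i => ballIn G (W ∪ Wi i) (Ai i) 1 := by
  intro v hv
  simp only [mem_sdiff, mem_union, mem_biUnion, mem_nbhdIn, not_or, not_exists, not_and] at hv
  obtain ⟨⟨-, hvX, u, ⟨i, hi, hu⟩, hadj⟩, hvW, hvWi⟩ := hv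
  refine mem_biUnion.2 ⟨i, hi, ?_⟩
  rw [ballIn_one]
  exact mem_union_right _ (mem_nbhdIn.2
    ⟨notMem_union.2 ⟨hvW, hvWi i hi⟩, hvX i hi, u, hu, hadj⟩)

theorem card_add_card_nbhdIn_biUnion_le :
    #(I.biUnion Ai) + #(nbhdIn G ∅ (I.biUnion Ai)) ≤
      #(I.biUnion fun i => ballIn G (W ∪ Wi i) (Ai i) 1) + (#W + ∑ i ∈ I, #(Wi i)) := by
  set X := I.biUnion Ai
  set S := W ∪ I.biUnion Wi
  have hsub : X ∪ (nbhdIn G ∅ X \ S) ⊆ I.biUnion fun i => ballIn G (W ∪ Wi i) (Ai i) 1 :=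
    union_subset (biUnion_mono fun i _ => subset_ballIn_one _ _)
      (nbhdIn_biUnion_sdiff_subset W Wi Ai I)
  have hdisj : Disjoint X (nbhdIn G ∅ X \ S) := (disjoint_nbhdIn ∅ X).mono_right sdiff_subset
  have hS : #S ≤ #W + ∑ i ∈ I, #(Wi i) :=
    (card_union_le _ _).trans (Nat.add_le_add_left card_biUnion_le _)
  calc #X + #(nbhdIn G ∅ X)
      ≤ #X + (#(nbhdIn G ∅ X \ S) + #S) := Nat.add_le_add_left card_le_card_sdiff_add_card _
    _ = #(X ∪ (nbhdIn G ∅ X \ S)) + #S := by rw [card_union_of_disjoint hdisj, add_assoc]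
    _ ≤ _ := Nat.add_le_add (card_le_card hsub) hS

theorem le_card_biUnion_ballIn {a b ρ x : ℝ} (hG : ExpansionProperty G a b ρ) (hρ : 0 ≤ ρ)
    (ha : a ≤ #I * x) (hb : (1 + ρ / 4) * #I * x ≤ b) (hX : #I * x ≤ #(I.biUnion Ai))
    (hW : #W ≤ ρ * #I * x / 2) (hWi : ∀ i ∈ I, #(Wi i) ≤ ρ * x / 4) :
    (1 + ρ / 4) * #I * x ≤ #(I.biUnion fun i => ballIn G (W ∪ Wi i) (Ai i) 1) := by
  set X := I.biUnion Ai
  have hXB : #X ≤ #(I.biUnion fun i => ballIn G (W ∪ Wi i) (Ai i) 1) :=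
    card_le_card (biUnion_mono fun i _ => subset_ballIn_one _ _)
  rcases le_or_gt ((1 + ρ / 4) * #I * x) #X with hlarge | hsmall
  · exact hlarge.trans (by exact_mod_cast hXB)
  have hexp := hG X (ha.trans hX) (hsmall.le.trans hb)
  have hcount : (#X : ℝ) + #(nbhdIn G ∅ X) ≤
      #(I.biUnion fun i => ballIn G (W ∪ Wi i) (Ai i) 1) + (#W + ∑ i ∈ I, (#(Wi i) : ℝ)) := by
    exact_mod_cast card_add_card_nbhdIn_biUnion_le W Wi Ai I
  have hsum : ∑ i ∈ I, (#(Wi i) : ℝ) ≤ #I * (ρ * x / 4) := by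
    simpa using sum_le_sum hWi
  linarith [mul_le_mul_of_nonneg_left hX hρ]

end Balls

theorem statement_4_general [Fintype V] (G : SimpleGraph V) (a b q k : ℕ) (x ρ : ℝ)
    (hk : 0 < k) (hρ : 0 < ρ)
    (hax : (a : ℝ) ≤ (k : ℝ) * x) (hxb : (k : ℝ) * x ≤ (b : ℝ) / (3 * (1 + ρ / 4)))
    (hG : ExpansionProperty G a b ρ)
    (W : Finset V) (Wi Ai : Fin q → Finset V)
    (hW : (W.card : ℝ) ≤ ρ * (k : ℝ) * x / 2)
    (hWi : ∀ i, ((Wi i).card : ℝ) ≤ ρ * x / 4)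
    (hcoll : ∀ I : Finset (Fin q), k ≤ I.card → I.card ≤ 3 * k →
      (I.card : ℝ) * x ≤ ((I.biUnion Ai).card : ℝ)) :
    ∃ J : Finset (Fin q), q - k ≤ J.card ∧
      (∀ j ∈ J, (1 + ρ / 4) * x ≤ ((ballIn G (W ∪ Wi j) (Ai j) 1).card : ℝ)) ∧
      (∀ I ⊆ J, k ≤ I.card → I.card ≤ 3 * k →
        (1 + ρ / 4) * (I.card : ℝ) * x
          ≤ ((I.biUnion fun i => ballIn G (W ∪ Wi i) (Ai i) 1).card : ℝ)) := by
  have hkpos : (0 : ℝ) < k := by exact_mod_cast hk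
  have hx : 0 ≤ x := nonneg_of_mul_nonneg_right ((Nat.cast_nonneg a).trans hax) hkpos
  have hcollExp : ∀ I : Finset (Fin q), k ≤ #I → #I ≤ 3 * k →
      (1 + ρ / 4) * #I * x ≤ #(I.biUnion fun i => ballIn G (W ∪ Wi i) (Ai i) 1) := by
    intro I hkI hI3k
    have hkI' : (k : ℝ) ≤ #I := by exact_mod_cast hkI
    have hI3k' : (#I : ℝ) ≤ 3 * k := by exact_mod_cast hI3k
    have hb : 3 * (1 + ρ / 4) * (k * x) ≤ b := by
      rwa [le_div_iff₀ (by positivity), mul_comm] at hxb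
    refine le_card_biUnion_ballIn W Wi Ai I hG hρ.le ?_ ?_ (hcoll I hkI hI3k) ?_
      fun i _ => hWi i
    · nlinarith
    · nlinarith
    · nlinarith
  set good : Fin q → Prop := fun j => (1 + ρ / 4) * x ≤ #(ballIn G (W ∪ Wi j) (Ai j) 1)
  refine ⟨univ.filter good, ?_, fun j hj => (mem_filter.1 hj).2, fun I _ => hcollExp I⟩
  simpa using card_sub_le_card_filter_of_forall_card_eq good k fun I hI => by
    by_contra! hbad
    have hlt := cast_card_biUnion_lt_card_mul (card_pos.1 (hI ▸ hk)) fun i hi => not_le.1 (hbad i hi)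
    linarith [hcollExp I hI.ge (by omega)]

/-- the one-step collective expansion lemma. -/
theorem statement_4 [Fintype V] (G : SimpleGraph V) (a b q k : ℕ) (x ρ : ℝ)
    (ha : 0 < a) (hb : 0 < b) (hq : 0 < q) (hk : 0 < k) (hρ : 0 < ρ)
    (hax : (a : ℝ) ≤ (k : ℝ) * x) (hxb : (k : ℝ) * x ≤ (b : ℝ) / (3 * (1 + ρ / 4)))
    (hG : ExpansionProperty G a b ρ)
    (W : Finset V) (Wi Ai : Fin q → Finset V)
    (hW : (W.card : ℝ) ≤ ρ * (k : ℝ) * x / 2)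
    (hA : ∀ i, x ≤ ((Ai i).card : ℝ))
    (hWi : ∀ i, ((Wi i).card : ℝ) ≤ ρ * x / 4)
    (hd1 : ∀ i, Disjoint (Ai i) (Wi i)) (hd2 : ∀ i, Disjoint (Ai i) W)
    (hcoll : ∀ I : Finset (Fin q), k ≤ I.card → I.card ≤ 3 * k →
      (I.card : ℝ) * x ≤ ((I.biUnion Ai).card : ℝ)) :
    ∃ J : Finset (Fin q), q - k ≤ J.card ∧
      (∀ j ∈ J, (1 + ρ / 4) * x ≤ ((ballIn G (W ∪ Wi j) (Ai j) 1).card : ℝ)) ∧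
      (∀ I ⊆ J, k ≤ I.card → I.card ≤ 3 * k →
        (1 + ρ / 4) * (I.card : ℝ) * x
          ≤ ((I.biUnion fun i => ballIn G (W ∪ Wi i) (Ai i) 1).card : ℝ)) :=
  statement_4_general G a b q k x ρ hk hρ hax hxb hG W Wi Ai hW hWi hcoll
end

section
/- Let G, a, b, x, ρ and sets A_i, W_i (i ∈ [q]), W be as in the hypotheses of the previous ball-expansion lemma (G has (a,b,ρ)-expansion-property, |W| ≤ ρkx/2, |A_i| ≥ x, |W_i| ≤ ρx/4, A_i disjoint from W∪W_i, and |⋃_{i∈I}A_i| ≥ |I|x for all I with k ≤ |I| ≤ 3k, with a ≤ kx < b/20). Suppose additionally q > 20k·(log k)/ρ, r ≥ 10·(log k)/ρ, and 0 < ρ < 1. Then there exists i ∈ [q] such that |B^r_{G−(W∪W_i)}(A_i)| ≥ kx/2. -/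
open Finset SimpleGraph
open scoped Classical

variable {V : Type*}

/-!
Fix `2k` indices and let `U_j` be the union of their balls of radius `j`. It starts with at
least `2kx` vertices, and the deleted vertices `W ∪ ⋃ W_i` number at most `ρkx ≤ ρ|U_j|/2`, so as
long as `|U_j| < 18kx` the expansion property makes `U_j` grow by a factor `1 + ρ/2` per step;
after `s ≤ 9/ρ` steps it has `18kx` vertices. Greedily discarding subfamilies whose balls cover
few vertices leaves an eighth of the indices whose balls still cover `2kx` vertices, and we
repeat with them. After `log₈ k` rounds at most `36` indices cover `18kx` vertices, so one ball
has `kx/2` vertices, and `r ≥ 10 log k / ρ` pays for all `(log₈ k + 1) s` steps.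
-/

/-- Greedy deletion: removing one by one the subfamilies `S` with `|⋃_S B| < |S| θ` loses fewer
than `θ` vertices per removed index. -/
theorem Finset.exists_subset_forall_mul_le_card_biUnion {ι α : Type*} (B : ι → Finset α)
    {θ : ℝ} (hθ : 0 ≤ θ) (T : Finset ι) :
    ∃ K ⊆ T, (#(T.biUnion B) : ℝ) ≤ #(K.biUnion B) + #T * θ ∧
      ∀ S ⊆ K, #S * θ ≤ #(S.biUnion B) := by
  induction T using Finset.strongInduction with
  | _ T ih =>
    by_cases hgood : ∀ S ⊆ T, #S * θ ≤ #(S.biUnion B)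
    · exact ⟨T, Subset.rfl, le_add_of_nonneg_right (by positivity), hgood⟩
    push Not at hgood
    obtain ⟨S, hST, hS⟩ := hgood
    have hSne : S.Nonempty := by
      rw [nonempty_iff_ne_empty]
      rintro rfl
      simp at hS
    obtain ⟨K, hK, hcover, hspread⟩ := ih (T \ S) (sdiff_ssubset hST hSne)
    refine ⟨K, hK.trans sdiff_subset, ?_, hspread⟩
    have hsplit : T.biUnion B = (T \ S).biUnion B ∪ S.biUnion B := by
      rw [← union_biUnion, sdiff_union_of_subset hST]
    have hcardT : (#(T \ S) : ℝ) + #S = #T := by exact_mod_cast card_sdiff_add_card_eq_card hST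
    have hunion : (#(T.biUnion B) : ℝ) ≤ #((T \ S).biUnion B) + #(S.biUnion B) := by
      rw [hsplit]; exact_mod_cast card_union_le _ _
    rw [← hcardT, add_mul]
    linarith

theorem Finset.exists_subset_mul_card_lt_and_le_card_biUnion {ι α : Type*} (B : ι → Finset α)
    {n : ℕ} (hn : 0 < n) {m : ℝ} (hm : 0 ≤ m) {T : Finset ι}
    (hT : (2 * n + 2) * m ≤ #(T.biUnion B)) :
    ∃ T' ⊆ T, n * #T' < #T + n ∧ 2 * m ≤ #(T'.biUnion B) := by
  rcases T.eq_empty_or_nonempty with rfl | hTne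
  · exact ⟨∅, Subset.rfl, by simpa using hn, by simp at hT; simp; nlinarith⟩
  have hTpos : (0 : ℝ) < #T := by exact_mod_cast hTne.card_pos
  have hnpos : (0 : ℝ) < n := by exact_mod_cast hn
  set θ := 2 * n * m / #T with hθ
  obtain ⟨K, hKT, hcover, hspread⟩ :=
    exists_subset_forall_mul_le_card_biUnion B (by positivity : 0 ≤ θ) T
  have hθT : #T * θ = 2 * n * m := by rw [hθ]; field_simp
  by_cases hK : n * #K < #T + n
  · exact ⟨K, hKT, hK, by linarith⟩
  push Not at hK
  set t := ⌈(#T : ℝ) / n⌉₊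
  have ht : (t : ℝ) < #T / n + 1 := Nat.ceil_lt_add_one (by positivity)
  have htK : t ≤ #K := by
    have : (#T : ℝ) / n + 1 ≤ #K := by
      rw [div_add_one hnpos.ne', div_le_iff₀ hnpos]
      exact_mod_cast (by linarith : #T + n ≤ #K * n)
    exact_mod_cast (ht.trans_le this).le
  obtain ⟨T', hT'K, hT'⟩ := exists_subset_card_eq htK
  refine ⟨T', hT'K.trans hKT, ?_, ?_⟩
  · have : (n : ℝ) * t < #T + n := by
      calc (n : ℝ) * t < n * (#T / n + 1) := by gcongr
        _ = #T + n := by field_simp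
    rw [hT']; exact_mod_cast this
  · calc 2 * m = #T / n * θ := by rw [hθ]; field_simp
      _ ≤ #T' * θ := by rw [hT']; gcongr; exact Nat.le_ceil _
      _ ≤ _ := hspread T' hT'K

section Balls

variable [Fintype V] (G : SimpleGraph V)

theorem ballIn_mono (D A : Finset V) : Monotone (ballIn G D A) :=
  monotone_nat_of_le_succ fun _ => subset_union_left

theorem subset_ballIn (D A : Finset V) (r : ℕ) : A ⊆ ballIn G D A r :=
  ballIn_mono G D A (Nat.zero_le r)

variable {ι : Type*} (D A : ι → Finset V)

noncomputable def ballUnion (T : Finset ι) (j : ℕ) : Finset V :=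
  T.biUnion fun i => ballIn G (D i) (A i) j

@[simp]
theorem ballUnion_zero (T : Finset ι) : ballUnion G D A T 0 = T.biUnion A := rfl

theorem ballUnion_mono (T : Finset ι) : Monotone (ballUnion G D A T) :=
  fun _ _ hj => biUnion_mono fun i _ => ballIn_mono G (D i) (A i) hj

/-- Every neighbour of `⋃_i B^j(A_i)` outside `⋃_i D_i` lies in `⋃_i B^{j+1}(A_i)`. -/
theorem card_ballUnion_add_card_nbhdIn_le (T : Finset ι) (j : ℕ) :
    #(ballUnion G D A T j) + #(nbhdIn G ∅ (ballUnion G D A T j)) ≤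
      #(ballUnion G D A T (j + 1)) + #(T.biUnion D) := by
  set X := ballUnion G D A T j
  set N := nbhdIn G ∅ X
  have hdisj : Disjoint X (N \ T.biUnion D) :=
    disjoint_right.2 fun v hv => ((mem_filter.1 (mem_sdiff.1 hv).1).2.2.1)
  have hsub : X ∪ (N \ T.biUnion D) ⊆ ballUnion G D A T (j + 1) := by
    refine union_subset (ballUnion_mono G D A T j.le_succ) fun v hv => ?_
    obtain ⟨hvN, hvD⟩ := mem_sdiff.1 hv
    obtain ⟨-, -, hvX, u, huX, huv⟩ := mem_filter.1 hvN
    obtain ⟨i, hiT, hu⟩ := mem_biUnion.1 huX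
    refine mem_biUnion.2 ⟨i, hiT, mem_union_right _ (mem_filter.2 ⟨mem_univ v, ?_, ?_, u, hu, huv⟩)⟩
    · exact fun hvDi => hvD (mem_biUnion.2 ⟨i, hiT, hvDi⟩)
    · exact fun hvB => hvX (mem_biUnion.2 ⟨i, hiT, hvB⟩)
  calc #X + #N ≤ #X + (#(N \ T.biUnion D) + #(T.biUnion D)) := by
        gcongr; exact card_le_card_sdiff_add_card
    _ = #(X ∪ (N \ T.biUnion D)) + #(T.biUnion D) := by rw [card_union_of_disjoint hdisj]; ring
    _ ≤ _ := by gcongr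

theorem card_ballUnion_succ_ge {a b ρ : ℝ} (hG : ExpansionProperty G a b ρ) {T : Finset ι} {j : ℕ}
    (ha : a ≤ #(ballUnion G D A T j)) (hb : #(ballUnion G D A T j) ≤ b) :
    (1 + ρ) * #(ballUnion G D A T j) - #(T.biUnion D) ≤ #(ballUnion G D A T (j + 1)) := by
  have hN := hG _ ha hb
  have hstep : (#(ballUnion G D A T j) : ℝ) + #(nbhdIn G ∅ (ballUnion G D A T j)) ≤
      #(ballUnion G D A T (j + 1)) + #(T.biUnion D) := by
    exact_mod_cast card_ballUnion_add_card_nbhdIn_le G D A T j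
  linarith

theorem min_le_card_ballUnion_add {a b ρ L : ℝ} (hG : ExpansionProperty G a b ρ) (hρ : 0 ≤ ρ)
    (hL : L ≤ b) {T : Finset ι} {j : ℕ} (ha : a ≤ #(ballUnion G D A T j))
    (hD : #(T.biUnion D) ≤ ρ / 2 * #(ballUnion G D A T j)) (s : ℕ) :
    min L ((1 + ρ / 2) ^ s * #(ballUnion G D A T j)) ≤ #(ballUnion G D A T (j + s)) := by
  induction s with
  | zero => simp
  | succ s ih =>
    have hmono : (#(ballUnion G D A T j) : ℝ) ≤ #(ballUnion G D A T (j + s)) := by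
      exact_mod_cast card_le_card (ballUnion_mono G D A T (Nat.le_add_right j s))
    by_cases hbig : L ≤ #(ballUnion G D A T (j + s))
    · exact (min_le_left _ _).trans (hbig.trans (by
        exact_mod_cast card_le_card (ballUnion_mono G D A T (Nat.le_succ (j + s)))))
    push Not at hbig
    have hgrow : (1 + ρ / 2) ^ s * #(ballUnion G D A T j) ≤ #(ballUnion G D A T (j + s)) := by
      rcases min_choice L ((1 + ρ / 2) ^ s * #(ballUnion G D A T j)) with h | h <;> rw [h] at ih
      · linarith
      · exact ih
    have hstep := card_ballUnion_succ_ge G D A hG (ha.trans hmono) (hbig.le.trans hL)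
    calc min L ((1 + ρ / 2) ^ (s + 1) * #(ballUnion G D A T j))
        ≤ (1 + ρ / 2) * ((1 + ρ / 2) ^ s * #(ballUnion G D A T j)) := by
          rw [pow_succ']; exact (min_le_right _ _).trans (le_of_eq (by ring))
      _ ≤ (1 + ρ / 2) * #(ballUnion G D A T (j + s)) := by gcongr
      _ ≤ #(ballUnion G D A T (j + s + 1)) := by nlinarith

section Rounds

variable {a b ρ m : ℝ} {s r : ℕ}

theorem eighteen_mul_le_card_ballUnion (hG : ExpansionProperty G a b ρ) (hρ : 0 ≤ ρ)
    (ha : a ≤ 2 * m) (hb : 18 * m ≤ b) (hs : 9 ≤ (1 + ρ / 2) ^ s) {T : Finset ι} {j : ℕ}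
    (hD : #(T.biUnion D) ≤ ρ * m) (hU : 2 * m ≤ #(ballUnion G D A T j)) :
    18 * m ≤ #(ballUnion G D A T (j + s)) := by
  refine le_trans (le_min le_rfl ?_) (min_le_card_ballUnion_add G D A hG hρ hb (ha.trans hU)
    (by nlinarith) s)
  nlinarith

theorem exists_le_card_ballIn_of_card_le (hG : ExpansionProperty G a b ρ) (hρ : 0 ≤ ρ)
    (hm : 0 < m) (ha : a ≤ 2 * m) (hb : 18 * m ≤ b) (hs : 9 ≤ (1 + ρ / 2) ^ s) {T : Finset ι}
    {j : ℕ} (hT : #T ≤ 36) (hD : #(T.biUnion D) ≤ ρ * m) (hU : 2 * m ≤ #(ballUnion G D A T j))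
    (hr : j + s ≤ r) : ∃ i ∈ T, m / 2 ≤ #(ballIn G (D i) (A i) r) := by
  have h18 := eighteen_mul_le_card_ballUnion G D A hG hρ ha hb hs hD hU
  have hTne : T.Nonempty := by
    rw [nonempty_iff_ne_empty]
    rintro rfl
    simp [ballUnion] at h18
    linarith
  have hsum : ∑ _i ∈ T, m / 2 ≤ ∑ i ∈ T, (#(ballIn G (D i) (A i) (j + s)) : ℝ) :=
    calc ∑ _i ∈ T, m / 2 = #T * (m / 2) := by simp
      _ ≤ 36 * (m / 2) := by gcongr; exact_mod_cast hT
      _ ≤ #(ballUnion G D A T (j + s)) := by linarith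
      _ ≤ ∑ i ∈ T, (#(ballIn G (D i) (A i) (j + s)) : ℝ) := by exact_mod_cast card_biUnion_le
  obtain ⟨i, hi, h⟩ := exists_le_of_sum_le hTne hsum
  exact ⟨i, hi, h.trans (by exact_mod_cast card_le_card (ballIn_mono G (D i) (A i) hr))⟩

theorem exists_le_card_ballIn (hG : ExpansionProperty G a b ρ) (hρ : 0 ≤ ρ) (hm : 0 < m)
    (ha : a ≤ 2 * m) (hb : 18 * m ≤ b) (hs : 9 ≤ (1 + ρ / 2) ^ s) (n : ℕ) {T : Finset ι} {j : ℕ}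
    (hT : #T ≤ 36 * 8 ^ n) (hD : #(T.biUnion D) ≤ ρ * m) (hU : 2 * m ≤ #(ballUnion G D A T j))
    (hr : j + (n + 1) * s ≤ r) : ∃ i ∈ T, m / 2 ≤ #(ballIn G (D i) (A i) r) := by
  induction n generalizing T j with
  | zero =>
    exact exists_le_card_ballIn_of_card_le G D A hG hρ hm ha hb hs (by simpa using hT) hD hU
      (by simpa using hr)
  | succ n ih =>
    by_cases h36 : #T ≤ 36
    · exact exists_le_card_ballIn_of_card_le G D A hG hρ hm ha hb hs h36 hD hU (by nlinarith)
    have h18 := eighteen_mul_le_card_ballUnion G D A hG hρ ha hb hs hD hU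
    obtain ⟨T', hT'T, hT', hU'⟩ := exists_subset_mul_card_lt_and_le_card_biUnion
      (fun i => ballIn G (D i) (A i) (j + s)) (n := 8) (T := T) (by norm_num) hm.le
      (by norm_num; exact h18)
    have hD' : (#(T'.biUnion D) : ℝ) ≤ ρ * m :=
      le_trans (by exact_mod_cast card_le_card (biUnion_subset_biUnion_of_subset_left D hT'T)) hD
    obtain ⟨i, hi, h⟩ := ih (by rw [pow_succ] at hT; omega) hD' hU' (by nlinarith)
    exact ⟨i, hT'T hi, h⟩

end Rounds

end Balls

theorem exists_nine_le_one_add_half_pow {ρ : ℝ} (hρ0 : 0 < ρ) (hρ1 : ρ ≤ 1) :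
    ∃ s : ℕ, 9 ≤ (1 + ρ / 2) ^ s ∧ (s : ℝ) ≤ 9 / ρ := by
  refine ⟨⌈8 / ρ⌉₊, ?_, ?_⟩
  · have hlog : ρ / 3 ≤ Real.log (1 + ρ / 2) := by
      refine le_trans ?_ (Real.one_sub_inv_le_log_of_pos (by positivity))
      rw [div_le_iff₀ (by norm_num), ← sub_nonneg]
      have : (1 - (1 + ρ / 2)⁻¹) * 3 - ρ = ρ * (1 - ρ) / (2 + ρ) := by field_simp; ring
      rw [this]
      exact div_nonneg (mul_nonneg hρ0.le (by linarith)) (by linarith)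
    have hexp : (9 : ℝ) ≤ Real.exp (8 / 3) := by
      have he : (2.7 : ℝ) < Real.exp 1 := lt_trans (by norm_num) Real.exp_one_gt_d9
      have h23 : 1 + 2 / 3 ≤ Real.exp (2 / 3) := by linarith [Real.add_one_le_exp (2 / 3 : ℝ)]
      have : Real.exp (8 / 3) = Real.exp 1 * Real.exp 1 * Real.exp (2 / 3) := by
        rw [← Real.exp_add, ← Real.exp_add]; norm_num
      rw [this]
      nlinarith [Real.exp_pos (2 / 3 : ℝ)]
    calc (9 : ℝ) ≤ Real.exp (8 / ρ * (ρ / 3)) := by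
          rwa [show 8 / ρ * (ρ / 3) = 8 / 3 by field_simp]
      _ ≤ Real.exp (⌈8 / ρ⌉₊ * Real.log (1 + ρ / 2)) := by
          gcongr
          exact Nat.le_ceil _
      _ = (1 + ρ / 2) ^ ⌈8 / ρ⌉₊ := by rw [← Real.log_pow, Real.exp_log (by positivity)]
  · have : (1 : ℝ) ≤ 1 / ρ := by rw [le_div_iff₀ hρ0]; linarith
    have := Nat.ceil_lt_add_one (by positivity : 0 ≤ 8 / ρ)
    linarith [show 8 / ρ + 1 / ρ = 9 / ρ by ring]

theorem one_le_log_natCast {k : ℕ} (hk : 3 ≤ k) : 1 ≤ Real.log k := by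
  rw [Real.le_log_iff_exp_le (by positivity)]
  have : (3 : ℝ) ≤ k := by exact_mod_cast hk
  linarith [Real.exp_one_lt_d9]

theorem nine_mul_log_eight_add_one_le {k : ℕ} (hk : 3 ≤ k) :
    9 * ((Nat.log 8 k : ℝ) + 1) ≤ 10 * Real.log k := by
  have hlog3 := one_le_log_natCast hk
  rcases lt_or_ge k 8 with hk8 | hk8
  · rw [Nat.log_eq_zero_iff.2 (Or.inl hk8)]
    push_cast; linarith
  have hlog8 : 2 ≤ Real.log 8 := by
    rw [Real.le_log_iff_exp_le (by norm_num), show (2 : ℝ) = 1 + 1 by norm_num, Real.exp_add]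
    nlinarith [Real.exp_one_lt_d9, Real.exp_pos 1]
  have hnk : (Nat.log 8 k : ℝ) * Real.log 8 ≤ Real.log k := by
    rw [← Real.log_pow]
    exact Real.log_le_log (by positivity) (by exact_mod_cast Nat.pow_log_le_self 8 (by omega))
  have hk8' : Real.log 8 ≤ Real.log k := Real.log_le_log (by norm_num) (by exact_mod_cast hk8)
  nlinarith [(Nat.cast_nonneg (Nat.log 8 k) : (0 : ℝ) ≤ _)]

theorem exists_rounds_le {ρ : ℝ} {k r : ℕ} (hk : 3 ≤ k) (hρ0 : 0 < ρ) (hρ1 : ρ ≤ 1)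
    (hr : 10 * Real.log k / ρ ≤ r) :
    ∃ n s : ℕ, 9 ≤ (1 + ρ / 2) ^ s ∧ 2 * k ≤ 36 * 8 ^ n ∧ (n + 1) * s ≤ r := by
  obtain ⟨s, hs, hsρ⟩ := exists_nine_le_one_add_half_pow hρ0 hρ1
  refine ⟨Nat.log 8 k, s, hs, ?_, ?_⟩
  · have := Nat.lt_pow_succ_log_self (by norm_num : 1 < 8) k
    rw [pow_succ] at this
    omega
  · have : ((Nat.log 8 k + 1) * s : ℝ) ≤ r :=
      calc ((Nat.log 8 k + 1) * s : ℝ) ≤ (Nat.log 8 k + 1) * (9 / ρ) := by gcongr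
        _ = 9 * (Nat.log 8 k + 1) / ρ := by ring
        _ ≤ 10 * Real.log k / ρ := by gcongr ?_ / ρ; exact nine_mul_log_eight_add_one_le hk
        _ ≤ r := hr
    exact_mod_cast this

theorem two_mul_le_of_mul_log_div_lt {ρ : ℝ} {k q : ℕ} (hk : 3 ≤ k) (hρ0 : 0 < ρ) (hρ1 : ρ ≤ 1)
    (hq : 20 * k * Real.log k / ρ < q) : 2 * k ≤ q := by
  have : (2 * k : ℝ) ≤ 20 * k * Real.log k / ρ := by
    rw [le_div_iff₀ hρ0]
    nlinarith [one_le_log_natCast hk, (Nat.cast_nonneg k : (0 : ℝ) ≤ k)]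
  exact_mod_cast this.trans hq.le

theorem card_biUnion_union_le {ι : Type*} (W : Finset V) (Wi : ι → Finset V) (T : Finset ι)
    {c : ℝ} (hWi : ∀ i, #(Wi i) ≤ c) :
    (#(T.biUnion fun i => W ∪ Wi i) : ℝ) ≤ #W + #T * c := by
  have hsub : (T.biUnion fun i => W ∪ Wi i) ⊆ W ∪ T.biUnion Wi :=
    biUnion_subset.2 fun i hi => union_subset_union_right (subset_biUnion_of_mem Wi hi)
  calc (#(T.biUnion fun i => W ∪ Wi i) : ℝ) ≤ #W + ∑ i ∈ T, (#(Wi i) : ℝ) := by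
        exact_mod_cast (card_le_card hsub).trans
          ((card_union_le _ _).trans (Nat.add_le_add_left card_biUnion_le _))
    _ ≤ #W + #T * c := by
        gcongr
        simpa using sum_le_sum fun i (_ : i ∈ T) => hWi i

theorem statement_6_general [Fintype V] (G : SimpleGraph V) (q k r x : ℕ) (a b ρ : ℝ)
    (hq : 0 < q) (hx : 0 < x)
    (hρ0 : 0 < ρ) (hρ1 : ρ < 1)
    (hax : a ≤ (k : ℝ) * (x : ℝ)) (hxb : (k : ℝ) * (x : ℝ) < b / 20)
    (hqbig : 20 * (k : ℝ) * Real.log k / ρ < (q : ℝ))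
    (hrbig : 10 * Real.log k / ρ ≤ (r : ℝ))
    (hG : ExpansionProperty G a b ρ)
    (W : Finset V) (Wi Ai : Fin q → Finset V)
    (hW : (W.card : ℝ) ≤ ρ * (k : ℝ) * (x : ℝ) / 2)
    (hA : ∀ i, (x : ℝ) ≤ ((Ai i).card : ℝ))
    (hWi : ∀ i, ((Wi i).card : ℝ) ≤ ρ * (x : ℝ) / 4)
    (hcoll : ∀ I : Finset (Fin q), k ≤ I.card → I.card ≤ 3 * k →
      (I.card : ℝ) * (x : ℝ) ≤ ((I.biUnion Ai).card : ℝ)) :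
    ∃ i : Fin q, (k : ℝ) * (x : ℝ) / 2 ≤ ((ballIn G (W ∪ Wi i) (Ai i) r).card : ℝ) := by
  rcases le_or_gt k 2 with hk2 | hk3
  · refine ⟨⟨0, hq⟩, ?_⟩
    have hball : (#(Ai ⟨0, hq⟩) : ℝ) ≤ #(ballIn G (W ∪ Wi ⟨0, hq⟩) (Ai ⟨0, hq⟩) r) := by
      exact_mod_cast card_le_card (subset_ballIn G _ _ r)
    have : (k : ℝ) ≤ 2 := by exact_mod_cast hk2
    nlinarith [hA ⟨0, hq⟩, (Nat.cast_nonneg x : (0 : ℝ) ≤ x)]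
  obtain ⟨n, s, hs, hn, hns⟩ := exists_rounds_le hk3 hρ0 hρ1.le hrbig
  obtain ⟨T, -, hT⟩ := exists_subset_card_eq (s := (univ : Finset (Fin q)))
    (by simpa using two_mul_le_of_mul_log_div_lt hk3 hρ0 hρ1.le hqbig)
  have hD : (#(T.biUnion fun i => W ∪ Wi i) : ℝ) ≤ ρ * (k * x) := by
    have := card_biUnion_union_le W Wi T hWi
    rw [hT] at this; push_cast at this; linarith
  have hU : 2 * (k * x : ℝ) ≤ #(ballUnion G (fun i => W ∪ Wi i) Ai T 0) := by
    have := hcoll T (by omega) (by omega)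
    rw [hT] at this; rw [ballUnion_zero]; push_cast at this; linarith
  have hkx : (0 : ℝ) < k * x := by positivity
  obtain ⟨i, -, hi⟩ := exists_le_card_ballIn G (fun i => W ∪ Wi i) Ai (r := r) hG hρ0.le hkx
    (by linarith) (by linarith) hs n (hT ▸ hn) hD hU (by omega)
  exact ⟨i, by linarith⟩

/-- corollary giving a single index whose ball reaches size `kx/2`. -/
theorem statement_6 [Fintype V] (G : SimpleGraph V) (q k r x : ℕ) (a b ρ : ℝ)
    (hq : 0 < q) (hk : 0 < k) (hr : 0 < r) (hx : 0 < x)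
    (hρ0 : 0 < ρ) (hρ1 : ρ < 1)
    (hax : a ≤ (k : ℝ) * (x : ℝ)) (hxb : (k : ℝ) * (x : ℝ) < b / 20)
    (hqbig : 20 * (k : ℝ) * Real.log k / ρ < (q : ℝ))
    (hrbig : 10 * Real.log k / ρ ≤ (r : ℝ))
    (hG : ExpansionProperty G a b ρ)
    (W : Finset V) (Wi Ai : Fin q → Finset V)
    (hW : (W.card : ℝ) ≤ ρ * (k : ℝ) * (x : ℝ) / 2)
    (hA : ∀ i, (x : ℝ) ≤ ((Ai i).card : ℝ))
    (hWi : ∀ i, ((Wi i).card : ℝ) ≤ ρ * (x : ℝ) / 4)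
    (hd1 : ∀ i, Disjoint (Ai i) (Wi i)) (hd2 : ∀ i, Disjoint (Ai i) W)
    (hcoll : ∀ I : Finset (Fin q), k ≤ I.card → I.card ≤ 3 * k →
      (I.card : ℝ) * (x : ℝ) ≤ ((I.biUnion Ai).card : ℝ)) :
    ∃ i : Fin q, (k : ℝ) * (x : ℝ) / 2 ≤ ((ballIn G (W ∪ Wi i) (Ai i) r).card : ℝ) :=
  statement_6_general G q k r x a b ρ hq hx hρ0 hρ1 hax hxb hqbig hrbig hG W Wi Ai hW hA hWi hcoll
end

section
/- Suppose p = ω((log n)/n). Then with high probability the random graph G = G(n, p) satisfies c(G) = c_{1/100}(G) ≥ n/1000; that is, w.h.p. every vertex set S ⊆ V(G) with |S| ≤ n/1000 induces a subgraph with average degree less than d(G)/100. -/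
open Finset SimpleGraph
open scoped Classical

variable {V : Type*}

/-- Probability, under the Erdős–Rényi model `G(n, p)`, of an event `E` of graphs on `Fin n`:
sum over all edge sets `A` of `p^{|A|}(1-p)^{N-|A|}` for graphs satisfying `E`. -/
noncomputable def erProb (n : ℕ) (p : ℝ) (E : SimpleGraph (Fin n) → Prop) : ℝ :=
  ∑ A ∈ ((Finset.univ : Finset (Sym2 (Fin n))).filter fun e => ¬ e.IsDiag).powerset,
    if E (SimpleGraph.fromEdgeSet ↑A) then
      p ^ A.card *
        (1 - p) ^ (((Finset.univ : Finset (Sym2 (Fin n))).filter fun e => ¬ e.IsDiag).card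
          - A.card)
    else 0


/-!
Work with the edge set `A` of `G(n, p)` directly. For a fixed set `T` of pairs, the exponential
moment of `|A ∩ T|` gives `P(θ |A ∩ T| ≥ t) ≤ exp (p (e^θ - 1) |T| - t)`. With `θ = -log 2` this
shows that `d(G) > np/4` w.h.p. With `θ = 1`, a fixed nonempty `S` of size `m ≤ n/1000` spans at
most `mn/2000` pairs, so `P(d(G[S]) ≥ np/400) ≤ exp (-mnp/3000) ≤ n^(-2m)` once
`np ≥ 10⁴ log n`, and summing `n^(-2|S|)` over all nonempty `S` gives `(1 + n⁻²)ⁿ - 1 ≤ 2/n`.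
Outside these events every `S` with `|S| ≤ n/1000` has `d(G[S]) < np/400 < d(G)/100`, which also
forces `c(G) ≥ n/1000`.
-/

noncomputable def bernoulliWeight {ι : Type*} (s : Finset ι) (p : ℝ) (A : Finset ι) : ℝ :=
  p ^ #A * (1 - p) ^ (#s - #A)

/-- The probability that a random subset of `s`, containing each element independently with
probability `p`, satisfies `E`. -/
noncomputable def bernoulliProb {ι : Type*} (s : Finset ι) (p : ℝ) (E : Finset ι → Prop) : ℝ :=
  ∑ A ∈ s.powerset with E A, bernoulliWeight s p A

section Bernoulli

variable {ι : Type*} {s : Finset ι} {p : ℝ}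

lemma bernoulliWeight_nonneg (hp0 : 0 ≤ p) (hp1 : p ≤ 1) (A : Finset ι) :
    0 ≤ bernoulliWeight s p A := by
  unfold bernoulliWeight
  have : 0 ≤ 1 - p := by linarith
  positivity

lemma bernoulliProb_nonneg (hp0 : 0 ≤ p) (hp1 : p ≤ 1) (E : Finset ι → Prop) :
    0 ≤ bernoulliProb s p E :=
  sum_nonneg fun A _ => bernoulliWeight_nonneg hp0 hp1 A

lemma bernoulliProb_add_bernoulliProb_not (E : Finset ι → Prop) :
    bernoulliProb s p E + bernoulliProb s p (fun A => ¬ E A) = 1 := by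
  rw [bernoulliProb, bernoulliProb, sum_filter_add_sum_filter_not]
  simp only [bernoulliWeight]
  rw [sum_pow_mul_eq_add_pow]
  simp

lemma bernoulliProb_le_one (hp0 : 0 ≤ p) (hp1 : p ≤ 1) (E : Finset ι → Prop) :
    bernoulliProb s p E ≤ 1 := by
  linarith [bernoulliProb_add_bernoulliProb_not (s := s) (p := p) E,
    bernoulliProb_nonneg (s := s) hp0 hp1 fun A => ¬ E A]

lemma bernoulliProb_mono (hp0 : 0 ≤ p) (hp1 : p ≤ 1) {E F : Finset ι → Prop}
    (h : ∀ A ⊆ s, E A → F A) : bernoulliProb s p E ≤ bernoulliProb s p F := by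
  refine sum_le_sum_of_subset_of_nonneg (fun A hA => ?_)
    fun A _ _ => bernoulliWeight_nonneg hp0 hp1 A
  simp only [mem_filter, mem_powerset] at hA ⊢
  exact ⟨hA.1, h A hA.1 hA.2⟩

lemma bernoulliProb_or_le (hp0 : 0 ≤ p) (hp1 : p ≤ 1) (E F : Finset ι → Prop) :
    bernoulliProb s p (fun A => E A ∨ F A) ≤ bernoulliProb s p E + bernoulliProb s p F := by
  have hw : ∀ A ∈ s.powerset, 0 ≤ bernoulliWeight s p A :=
    fun A _ => bernoulliWeight_nonneg hp0 hp1 A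
  calc bernoulliProb s p (fun A => E A ∨ F A)
      ≤ ∑ A ∈ {A ∈ s.powerset | E A} ∪ {A ∈ s.powerset | F A}, bernoulliWeight s p A :=
        sum_le_sum_of_subset_of_nonneg (fun A => by simp only [mem_filter, mem_union]; tauto)
          fun A hA _ => hw A (by rcases mem_union.1 hA with h | h <;> exact filter_subset _ _ h)
    _ ≤ bernoulliProb s p E + bernoulliProb s p F := by
        rw [bernoulliProb, bernoulliProb, ← sum_union_inter]
        exact le_add_of_nonneg_right
          (sum_nonneg fun A hA => hw A (filter_subset _ _ (mem_inter.1 hA).1))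

lemma bernoulliProb_exists_le (hp0 : 0 ≤ p) (hp1 : p ≤ 1) {κ : Type*} (I : Finset κ)
    (Q : κ → Finset ι → Prop) :
    bernoulliProb s p (fun A => ∃ i ∈ I, Q i A) ≤ ∑ i ∈ I, bernoulliProb s p (Q i) := by
  induction I using Finset.induction_on with
  | empty => simp [bernoulliProb]
  | insert j I hj ih =>
    simp only [exists_mem_insert, sum_insert hj]
    exact (bernoulliProb_or_le hp0 hp1 _ _).trans (add_le_add le_rfl ih)

lemma sum_bernoulliWeight_mul_pow_card_inter [DecidableEq ι] {T : Finset ι} (hT : T ⊆ s)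
    (l : ℝ) : ∑ A ∈ s.powerset, bernoulliWeight s p A * l ^ #(A ∩ T) = (1 - p + p * l) ^ #T := by
  have h := prod_add (fun i => p * if i ∈ T then l else 1) (fun _ => 1 - p) s
  have hterm : ∀ A ∈ s.powerset, (∏ i ∈ A, p * if i ∈ T then l else 1) * ∏ _i ∈ s \ A, (1 - p)
      = bernoulliWeight s p A * l ^ #(A ∩ T) := by
    intro A hA
    rw [bernoulliWeight, prod_mul_distrib, prod_const, prod_const,
      card_sdiff_of_subset (mem_powerset.1 hA), prod_ite_mem, prod_const]
    ring
  rw [sum_congr rfl hterm] at h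
  rw [← h, prod_congr rfl (g := fun i => if i ∈ T then 1 - p + p * l else 1)
    fun i _ => by split_ifs <;> ring, prod_ite_mem, inter_eq_right.2 hT, prod_const]

lemma bernoulliProb_le_mul_card_inter_le_exp [DecidableEq ι] (hp0 : 0 ≤ p) (hp1 : p ≤ 1)
    {T : Finset ι} (hT : T ⊆ s) (θ t : ℝ) :
    bernoulliProb s p (fun A => t ≤ θ * #(A ∩ T)) ≤
      Real.exp (p * (Real.exp θ - 1) * #T - t) := by
  calc bernoulliProb s p (fun A => t ≤ θ * #(A ∩ T))
      ≤ ∑ A ∈ s.powerset, bernoulliWeight s p A * Real.exp θ ^ #(A ∩ T) * Real.exp (-t) := by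
        rw [bernoulliProb, sum_filter]
        refine sum_le_sum fun A _ => ?_
        have hw := bernoulliWeight_nonneg (s := s) hp0 hp1 A
        split_ifs with h
        · rw [mul_assoc]
          refine le_mul_of_one_le_right hw ?_
          rw [← Real.exp_nat_mul, ← Real.exp_add]
          exact Real.one_le_exp (by linarith)
        · positivity
    _ = (1 - p + p * Real.exp θ) ^ #T * Real.exp (-t) := by
        rw [← sum_mul, sum_bernoulliWeight_mul_pow_card_inter hT]
    _ ≤ Real.exp (p * (Real.exp θ - 1)) ^ #T * Real.exp (-t) := by
        gcongr
        nlinarith [Real.add_one_le_exp (p * (Real.exp θ - 1))]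
    _ = Real.exp (p * (Real.exp θ - 1) * #T - t) := by
        rw [← Real.exp_nat_mul, ← Real.exp_add]
        ring_nf

lemma sum_powerset_erase_empty_pow_card_le [DecidableEq ι] (s : Finset ι) {x : ℝ} (hx : 0 ≤ x)
    (hsx : #s * x ≤ 1) : ∑ S ∈ s.powerset.erase ∅, x ^ #S ≤ 2 * (#s * x) := by
  have hsum : ∑ S ∈ s.powerset.erase ∅, x ^ #S = (1 + x) ^ #s - 1 := by
    have h := add_sum_erase s.powerset (fun S => x ^ #S) (empty_mem_powerset s)
    have h1 := sum_pow_mul_eq_add_pow x 1 s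
    simp only [one_pow, mul_one, card_empty, pow_zero] at h h1
    rw [add_comm x] at h1
    linarith
  calc ∑ S ∈ s.powerset.erase ∅, x ^ #S ≤ Real.exp (#s * x) - 1 := by
        rw [hsum, Real.exp_nat_mul]
        gcongr
        linarith [Real.add_one_le_exp x]
    _ ≤ 2 * (#s * x) := by
        have hy : 0 ≤ (#s : ℝ) * x := by positivity
        have := Real.abs_exp_sub_one_le (x := #s * x) (by rwa [abs_of_nonneg hy])
        rw [abs_of_nonneg hy] at this
        exact (le_abs_self _).trans this

end Bernoulli

section Graph

variable [Fintype V] [DecidableEq V]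

noncomputable def edgesWithin (S : Finset V) : Finset (Sym2 V) :=
  univ.filter fun e => ¬ e.IsDiag ∧ ∀ v ∈ e, v ∈ S

lemma edgesWithin_mono {S S' : Finset V} (h : S ⊆ S') : edgesWithin S ⊆ edgesWithin S' := by
  intro e
  simp only [edgesWithin, mem_filter, mem_univ, true_and]
  exact fun he => ⟨he.1, fun v hv => h (he.2 v hv)⟩

lemma degSum_fromEdgeSet (A : Finset (Sym2 V)) (S : Finset V) :
    degSum (fromEdgeSet ↑A) S = 2 * #(A ∩ edgesWithin S) := by
  set H := fromEdgeSet (↑(A ∩ edgesWithin S) : Set (Sym2 V))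
  calc degSum (fromEdgeSet ↑A) S = #(univ.filter fun x : V × V => H.Adj x.1 x.2) := by
        rw [degSum]
        congr 1
        ext ⟨u, v⟩
        simp only [H, edgesWithin, fromEdgeSet_adj, SetLike.mem_coe, ne_eq, mem_filter,
          mem_product, coe_inter, coe_filter, mem_univ, true_and, fromEdgeSet_inter, inf_adj,
          Set.mem_ofPred_eq, Sym2.mk_isDiag_iff, Sym2.mem_iff, forall_eq_or_imp, forall_eq]
        tauto
    _ = 2 * #H.edgeFinset := by convert (two_mul_card_edgeFinset H).symm
    _ = 2 * #(A ∩ edgesWithin S) := by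
        congr 2
        ext e
        rw [mem_edgeFinset]
        simp only [H, edgesWithin, coe_inter, coe_filter, mem_univ, true_and, fromEdgeSet_inter,
          edgeSet_inf, edgeSet_fromEdgeSet, Set.mem_inter_iff, Set.mem_sdiff, SetLike.mem_coe,
          Sym2.mem_diagSet, Set.mem_ofPred_eq, mem_inter, mem_filter]
        tauto

lemma two_mul_card_edgesWithin_le (S : Finset V) : 2 * #(edgesWithin S) ≤ #S ^ 2 := by
  rw [← inter_self (edgesWithin S), ← degSum_fromEdgeSet, degSum, sq, ← card_product]
  exact card_le_card fun x hx => by simp only [mem_filter] at hx; exact hx.1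

lemma avgDegOn_fromEdgeSet (A : Finset (Sym2 V)) (S : Finset V) :
    avgDegOn (fromEdgeSet ↑A) S = 2 * #(A ∩ edgesWithin S) / #S := by
  simp [avgDegOn, degSum_fromEdgeSet]

lemma edgesWithin_univ : edgesWithin (univ : Finset V) = univ.filter fun e => ¬ e.IsDiag := by
  simp [edgesWithin]

lemma card_edgesWithin_univ : #(edgesWithin (univ : Finset V)) = (Fintype.card V).choose 2 := by
  rw [edgesWithin_univ, ← Sym2.card_subtype_not_diag, Fintype.card_subtype]

end Graph

lemma erProb_eq_bernoulliProb (n : ℕ) (p : ℝ) (E : SimpleGraph (Fin n) → Prop) :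
    erProb n p E =
      bernoulliProb (edgesWithin univ) p fun A : Finset (Sym2 (Fin n)) => E (fromEdgeSet ↑A) := by
  rw [edgesWithin_univ, bernoulliProb, sum_filter]
  rfl

section Crux

variable [Fintype V] {G : SimpleGraph V}

lemma le_cruxSize {α m : ℝ} (hα : α ≤ 1)
    (h : ∀ S : Finset V, (#S : ℝ) ≤ m → avgDegOn G S < α * avgDeg G) :
    m ≤ cruxSize α G := by
  have hd : 0 ≤ avgDeg G := by unfold avgDeg avgDegOn; positivity
  have hne : {k | ∃ S : Finset V, #S = k ∧ α * avgDeg G ≤ avgDegOn G S}.Nonempty :=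
    ⟨_, univ, rfl, mul_le_of_le_one_left hd hα⟩
  obtain ⟨S, hS, hSα⟩ := Nat.sInf_mem hne
  by_contra! hlt
  exact (h S (by rw [hS]; exact hlt.le)).not_ge hSα

lemma cruxSize_ge_of_forall_avgDegOn_lt {d m : ℝ} (hd : 0 < d) (hG : 100 * d < avgDeg G)
    (h : ∀ S : Finset V, S.Nonempty → (#S : ℝ) ≤ m → avgDegOn G S < d) :
    m ≤ cruxSize (1 / 100) G ∧ ∀ S : Finset V, (#S : ℝ) ≤ m → avgDegOn G S < avgDeg G / 100 := by
  have hsmall : ∀ S : Finset V, (#S : ℝ) ≤ m → avgDegOn G S < avgDeg G / 100 := by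
    intro S hS
    obtain rfl | hne := S.eq_empty_or_nonempty
    · simp only [avgDegOn, card_empty, Nat.cast_zero, div_zero]
      linarith
    · linarith [h S hne hS]
  exact ⟨le_cruxSize (by norm_num) fun S hS => by linarith [hsmall S hS], hsmall⟩

end Crux

section RandomGraph

variable {n : ℕ} {p : ℝ}

lemma erProb_le_one (hp0 : 0 ≤ p) (hp1 : p ≤ 1) (E : SimpleGraph (Fin n) → Prop) :
    erProb n p E ≤ 1 := by
  rw [erProb_eq_bernoulliProb]
  exact bernoulliProb_le_one hp0 hp1 _

lemma erProb_avgDeg_le_le_exp (hp0 : 0 ≤ p) (hp1 : p ≤ 1) (hn : 2 ≤ n) :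
    erProb n p (fun G => avgDeg G ≤ n * p / 4) ≤ Real.exp (-(n ^ 2 * p / 30)) := by
  rw [erProb_eq_bernoulliProb]
  set U := edgesWithin (univ : Finset (Fin n))
  have hn' : (2 : ℝ) ≤ n := by exact_mod_cast hn
  have hU : (n : ℝ) ^ 2 / 4 ≤ #U := by
    rw [card_edgesWithin_univ, Fintype.card_fin, Nat.cast_choose_two]
    nlinarith
  have hlog2 : 0 < Real.log 2 := Real.log_pos one_lt_two
  calc _ ≤ bernoulliProb U p
        (fun A => -(n ^ 2 * p / 8 * Real.log 2) ≤ -Real.log 2 * #(A ∩ U)) := by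
        refine bernoulliProb_mono hp0 hp1 fun A _ hA => ?_
        rw [avgDeg, avgDegOn_fromEdgeSet, card_univ, Fintype.card_fin,
          div_le_iff₀ (by positivity)] at hA
        have hx : (#(A ∩ U) : ℝ) ≤ n ^ 2 * p / 8 := by linarith
        linarith [mul_le_mul_of_nonneg_left hx hlog2.le]
    _ ≤ Real.exp (p * (Real.exp (-Real.log 2) - 1) * #U - -(n ^ 2 * p / 8 * Real.log 2)) :=
        bernoulliProb_le_mul_card_inter_le_exp hp0 hp1 Subset.rfl _ _
    _ ≤ Real.exp (-(n ^ 2 * p / 30)) := by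
        rw [Real.exp_neg, Real.exp_log two_pos]
        gcongr
        have hlog2' : Real.log 2 ≤ 7 / 10 := Real.log_two_lt_d9.le.trans (by norm_num)
        have hn2p : (0 : ℝ) ≤ n ^ 2 * p := by positivity
        linarith [mul_le_mul_of_nonneg_left hU hp0, mul_le_mul_of_nonneg_left hlog2' hn2p]

lemma erProb_le_avgDegOn_le_exp (hp0 : 0 ≤ p) (hp1 : p ≤ 1) {S : Finset (Fin n)}
    (hS : S.Nonempty) (hSn : (#S : ℝ) ≤ n / 1000) :
    erProb n p (fun G => n * p / 400 ≤ avgDegOn G S) ≤ Real.exp (-(#S * n * p / 3000)) := by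
  rw [erProb_eq_bernoulliProb]
  set T := edgesWithin S
  have hm : (0 : ℝ) < #S := by exact_mod_cast hS.card_pos
  have hT : 2 * (#T : ℝ) ≤ #S ^ 2 := by exact_mod_cast two_mul_card_edgesWithin_le S
  have hTn : p * #T ≤ p * (#S * n / 2000) :=
    mul_le_mul_of_nonneg_left (by nlinarith [mul_le_mul_of_nonneg_left hSn hm.le]) hp0
  have he : (0 : ℝ) ≤ Real.exp 1 - 1 := by linarith [Real.add_one_le_exp (1 : ℝ)]
  calc _ ≤ bernoulliProb (edgesWithin univ) p (fun A => #S * n * p / 800 ≤ 1 * #(A ∩ T)) := by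
        refine bernoulliProb_mono hp0 hp1 fun A _ hA => ?_
        rw [avgDegOn_fromEdgeSet, le_div_iff₀ hm] at hA
        linarith
    _ ≤ Real.exp (p * (Real.exp 1 - 1) * #T - #S * n * p / 800) :=
        bernoulliProb_le_mul_card_inter_le_exp hp0 hp1 (edgesWithin_mono (subset_univ S)) _ _
    _ ≤ Real.exp (-(#S * n * p / 3000)) := by
        gcongr
        have he' : Real.exp 1 - 1 ≤ 43 / 25 := by linarith [Real.exp_one_lt_d9]
        have hmnp : (0 : ℝ) ≤ #S * n * p := by positivity
        linarith [mul_le_mul_of_nonneg_left hTn he,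
          mul_le_mul_of_nonneg_right he' (by positivity : (0 : ℝ) ≤ p * (#S * n / 2000))]

lemma erProb_avgDeg_le_le_one_div (hp0 : 0 ≤ p) (hp1 : p ≤ 1) (hn : 2 ≤ n)
    (hnp : 10 ^ 4 * Real.log n ≤ n * p) :
    erProb n p (fun G => avgDeg G ≤ n * p / 4) ≤ 1 / n := by
  have hn2 : (2 : ℝ) ≤ n := by exact_mod_cast hn
  have hn0 : (0 : ℝ) < n := by positivity
  have hlog : 0 < Real.log n := Real.log_pos (by linarith)
  refine (erProb_avgDeg_le_le_exp hp0 hp1 hn).trans ?_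
  rw [show (1 : ℝ) / n = Real.exp (-Real.log n) by rw [Real.exp_neg, Real.exp_log hn0, one_div],
    Real.exp_le_exp]
  nlinarith [mul_le_mul_of_nonneg_left hnp hn0.le, mul_le_mul_of_nonneg_right hn2 hlog.le]

lemma sum_erProb_le_avgDegOn_le (hp0 : 0 ≤ p) (hp1 : p ≤ 1) (hn : 2 ≤ n)
    (hnp : 10 ^ 4 * Real.log n ≤ n * p) :
    ∑ S ∈ univ.filter (fun S : Finset (Fin n) => S.Nonempty ∧ (#S : ℝ) ≤ n / 1000),
      erProb n p (fun G => n * p / 400 ≤ avgDegOn G S) ≤ 2 / n := by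
  have hn2 : (2 : ℝ) ≤ n := by exact_mod_cast hn
  have hn0 : (0 : ℝ) < n := by positivity
  calc _ ≤ ∑ S ∈ univ.filter (fun S : Finset (Fin n) => S.Nonempty ∧ (#S : ℝ) ≤ n / 1000),
          ((n : ℝ) ^ 2)⁻¹ ^ #S := by
        refine sum_le_sum fun S hS => ?_
        simp only [mem_filter] at hS
        refine (erProb_le_avgDegOn_le_exp hp0 hp1 hS.2.1 hS.2.2).trans ?_
        rw [← Real.exp_log (by positivity : (0 : ℝ) < ((n : ℝ) ^ 2)⁻¹), ← Real.exp_nat_mul,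
          Real.exp_le_exp, Real.log_inv, Real.log_pow]
        nlinarith [mul_le_mul_of_nonneg_left hnp (by positivity : (0 : ℝ) ≤ #S),
          Real.log_pos (by linarith : (1 : ℝ) < n)]
    _ ≤ ∑ S ∈ univ.powerset.erase ∅, ((n : ℝ) ^ 2)⁻¹ ^ #S := by
        refine sum_le_sum_of_subset_of_nonneg (fun S hS => ?_) fun _ _ _ => by positivity
        simp only [mem_filter] at hS
        exact mem_erase.2 ⟨hS.2.1.ne_empty, mem_powerset.2 (subset_univ S)⟩
    _ ≤ 2 * (#(univ : Finset (Fin n)) * ((n : ℝ) ^ 2)⁻¹) := by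
        refine sum_powerset_erase_empty_pow_card_le _ (by positivity) ?_
        rw [card_univ, Fintype.card_fin, sq, mul_inv, ← mul_assoc, mul_inv_cancel₀ hn0.ne',
          one_mul]
        exact inv_le_one_of_one_le₀ (by linarith)
    _ = 2 / n := by
        rw [card_univ, Fintype.card_fin]
        field_simp

lemma one_sub_three_div_le_erProb (hp0 : 0 ≤ p) (hp1 : p ≤ 1) (hn : 2 ≤ n)
    (hnp : 10 ^ 4 * Real.log n ≤ n * p) :
    1 - 3 / n ≤ erProb n p fun G => (n : ℝ) / 1000 ≤ (cruxSize (1 / 100) G : ℝ) ∧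
      ∀ S : Finset (Fin n), (#S : ℝ) ≤ n / 1000 → avgDegOn G S < avgDeg G / 100 := by
  set I := univ.filter fun S : Finset (Fin n) => S.Nonempty ∧ (#S : ℝ) ≤ n / 1000
  set bad := fun G : SimpleGraph (Fin n) =>
    avgDeg G ≤ n * p / 4 ∨ ∃ S ∈ I, n * p / 400 ≤ avgDegOn G S
  have hnp0 : 0 < n * p / 400 := by
    have : 0 < Real.log n := Real.log_pos (by exact_mod_cast hn)
    linarith
  have hgood : ∀ G : SimpleGraph (Fin n), ¬ bad G →
      (n : ℝ) / 1000 ≤ (cruxSize (1 / 100) G : ℝ) ∧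
        ∀ S : Finset (Fin n), (#S : ℝ) ≤ n / 1000 → avgDegOn G S < avgDeg G / 100 := by
    intro G hG
    simp only [bad, not_or, not_exists, not_and, not_le] at hG
    refine cruxSize_ge_of_forall_avgDegOn_lt hnp0 (by linarith [hG.1]) fun S hS hSn => hG.2 S ?_
    simp [I, hS, hSn]
  have hdense := erProb_avgDeg_le_le_one_div hp0 hp1 hn hnp
  have hsparse := sum_erProb_le_avgDegOn_le hp0 hp1 hn hnp
  simp only [erProb_eq_bernoulliProb] at hdense hsparse ⊢
  have hbad : bernoulliProb (edgesWithin univ) p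
      (fun A : Finset (Sym2 (Fin n)) => bad (fromEdgeSet ↑A)) ≤ 1 / n + 2 / n :=
    (bernoulliProb_or_le hp0 hp1 _ _).trans
      (add_le_add hdense ((bernoulliProb_exists_le hp0 hp1 I _).trans hsparse))
  have hcompl := bernoulliProb_add_bernoulliProb_not (s := edgesWithin univ) (p := p)
    fun A : Finset (Sym2 (Fin n)) => bad (fromEdgeSet ↑A)
  calc 1 - 3 / (n : ℝ)
      ≤ bernoulliProb (edgesWithin univ) p
          fun A : Finset (Sym2 (Fin n)) => ¬ bad (fromEdgeSet ↑A) := by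
        rw [show (3 : ℝ) / n = 1 / n + 2 / n by ring]
        linarith
    _ ≤ _ := bernoulliProb_mono hp0 hp1 fun _ _ hA => hgood _ hA

end RandomGraph

/-- if `p = ω(log n / n)` then w.h.p. `G(n,p)` has `c(G) ≥ n/1000`; that is,
every `S` with `|S| ≤ n/1000` induces average degree less than `d(G)/100`. -/
theorem statement_12 (p : ℕ → ℝ) (hp : ∀ n, 0 ≤ p n ∧ p n ≤ 1)
    (hω : ∀ C : ℝ, ∃ n₀ : ℕ, ∀ n ≥ n₀, C * Real.log n / (n : ℝ) ≤ p n) :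
    Filter.Tendsto
      (fun n => erProb n (p n) fun G =>
        (n : ℝ) / 1000 ≤ (cruxSize (1 / 100) G : ℝ) ∧
        ∀ S : Finset (Fin n), (S.card : ℝ) ≤ (n : ℝ) / 1000 →
          avgDegOn G S < avgDeg G / 100)
      Filter.atTop (nhds 1) := by
  obtain ⟨n₀, hn₀⟩ := hω (10 ^ 4)
  have hlower : Filter.Tendsto (fun n : ℕ => 1 - 3 / (n : ℝ)) Filter.atTop (nhds 1) := by
    simpa using (tendsto_const_div_atTop_nhds_zero_nat (3 : ℝ)).const_sub 1
  refine tendsto_of_tendsto_of_tendsto_of_le_of_le' hlower tendsto_const_nhds ?_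
    (Filter.Eventually.of_forall fun n => erProb_le_one (hp n).1 (hp n).2 _)
  filter_upwards [Filter.eventually_ge_atTop (max n₀ 2)] with n hn
  have hn2 : 2 ≤ n := le_of_max_le_right hn
  have hnp := hn₀ n (le_of_max_le_left hn)
  rw [div_le_iff₀ (by positivity), mul_comm (p n)] at hnp
  exact one_sub_three_div_le_erProb (hp n).1 (hp n).2 hn2 hnp
end

section
/- Let G′ be a graph with average degree d and let H ⊆ G′ be a subgraph with δ(H) ≥ d/16. Then every X ⊆ V(H) with |X| ≤ c_{1/100}(G′)/100 satisfies |N_H(X)| ≥ |X|. -/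
open Finset SimpleGraph
open scoped Classical

variable {V : Type*}

/-- small-set expansion from the crux: if `H ⊆ G'` has minimum degree at least
`d/16` (`d = d(G')`), then every `X ⊆ V(H)` with `|X| ≤ c_{1/100}(G')/100` satisfies
`|N_H(X)| ≥ |X|`. -/
theorem statement_18 [Fintype V] (G' : SimpleGraph V) (d : ℝ) (hd : avgDeg G' = d)
    (H : G'.Subgraph)
    (hδ : ∀ v ∈ H.verts, d / 16 ≤ ((H.neighborSet v).ncard : ℝ)) :
    ∀ X : Finset V, ↑X ⊆ H.verts →
      (X.card : ℝ) ≤ (cruxSize (1 / 100) G' : ℝ) / 100 →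
      (X.card : ℝ) ≤ (({v : V | v ∉ (X : Set V) ∧ ∃ u ∈ X, H.Adj u v} : Set V).ncard : ℝ) := by
  intro X hXH hXc
  by_contra hcon
  push_neg at hcon
  classical
  set N : Set V := {v : V | v ∉ (X : Set V) ∧ ∃ u ∈ X, H.Adj u v} with hNdef
  have hNfin : N.Finite := Set.toFinite N
  set Nf : Finset V := hNfin.toFinset with hNf
  have hNcard : N.ncard = Nf.card := by
    rw [hNf, Set.ncard_eq_toFinset_card N hNfin]
  set S : Finset V := X ∪ Nf with hS
  have hXS : X ⊆ S := Finset.subset_union_left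
  have hSsub : ∀ v ∈ X, ∀ u, H.Adj v u → u ∈ S := by
    intro v hv u hadj
    by_cases hu : u ∈ X
    · exact hXS hu
    · refine Finset.mem_union_right _ ?_
      rw [hNf, Set.Finite.mem_toFinset]
      exact ⟨hu, v, hv, hadj⟩
  -- per-vertex degree bound
  have hdeg : ∀ v ∈ X, d / 16 ≤ ((S.filter fun u => H.Adj v u).card : ℝ) := by
    intro v hv
    refine (hδ v (hXH hv)).trans ?_
    have hsub2 : H.neighborSet v ⊆ ↑(S.filter fun u => H.Adj v u) := by
      intro u hu
      simp only [Finset.coe_filter, Set.mem_setOf_eq]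
      exact ⟨hSsub v hv u hu, hu⟩
    have h2 := Set.ncard_le_ncard hsub2 (Finset.finite_toSet _)
    rw [Set.ncard_coe_finset] at h2
    exact_mod_cast h2
  -- counting: sum of filtered degrees ≤ degSum
  have nat_le : (∑ v ∈ X, (S.filter fun u => H.Adj v u).card) ≤ degSum G' S := by
    have hdisj : ∀ v ∈ X, ∀ w ∈ X, v ≠ w →
        Disjoint ((S.filter fun u => H.Adj v u).image fun u => (v, u))
          ((S.filter fun u => H.Adj w u).image fun u => (w, u)) := by
      intro v _ w _ hvw
      simp only [Finset.disjoint_left, Finset.mem_image]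
      rintro p ⟨a, _, rfl⟩ ⟨b, _, hb⟩
      exact hvw (congrArg Prod.fst hb).symm
    have hcard : (X.biUnion fun v => (S.filter fun u => H.Adj v u).image fun u => (v, u)).card
        = ∑ v ∈ X, (S.filter fun u => H.Adj v u).card := by
      rw [Finset.card_biUnion hdisj]
      refine Finset.sum_congr rfl fun v _ => ?_
      exact Finset.card_image_of_injective _ (fun a b h => congrArg Prod.snd h)
    have hsub3 : (X.biUnion fun v => (S.filter fun u => H.Adj v u).image fun u => (v, u))
        ⊆ (S ×ˢ S).filter fun p => G'.Adj p.1 p.2 := by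
      intro p hp
      simp only [Finset.mem_biUnion, Finset.mem_image] at hp
      obtain ⟨v, hv, u, hu, rfl⟩ := hp
      obtain ⟨huS, hadj⟩ := Finset.mem_filter.mp hu
      exact Finset.mem_filter.mpr ⟨Finset.mem_product.mpr ⟨hXS hv, huS⟩, hadj.adj_sub⟩
    calc (∑ v ∈ X, (S.filter fun u => H.Adj v u).card) = _ := hcard.symm
      _ ≤ ((S ×ˢ S).filter fun p => G'.Adj p.1 p.2).card := Finset.card_le_card hsub3
      _ = degSum G' S := rfl
  have hsum : (X.card : ℝ) * (d / 16) ≤ (degSum G' S : ℝ) := by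
    calc (X.card : ℝ) * (d / 16) = ∑ _v ∈ X, d / 16 := by
          rw [Finset.sum_const, nsmul_eq_mul]
      _ ≤ ∑ v ∈ X, ((S.filter fun u => H.Adj v u).card : ℝ) := Finset.sum_le_sum hdeg
      _ = ((∑ v ∈ X, (S.filter fun u => H.Adj v u).card : ℕ) : ℝ) := by push_cast; ring
      _ ≤ (degSum G' S : ℝ) := Nat.cast_le.mpr nat_le
  have hd0 : 0 ≤ d := by
    rw [← hd]
    unfold avgDeg avgDegOn
    positivity
  have hNfX : (Nf.card : ℝ) < (X.card : ℝ) := by rw [← hNcard]; exact_mod_cast hcon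
  have hX1 : (1 : ℝ) ≤ (X.card : ℝ) := by
    have : 0 < X.card := by
      by_contra h
      push_neg at h
      interval_cases hc : X.card <;> simp_all
    exact_mod_cast this
  have hS2X : (S.card : ℝ) ≤ 2 * (X.card : ℝ) := by
    have := Finset.card_union_le X Nf
    have h2 : (S.card : ℝ) ≤ (X.card : ℝ) + (Nf.card : ℝ) := by exact_mod_cast this
    linarith
  have hSpos : 0 < (S.card : ℝ) := by
    have := Finset.card_le_card hXS
    have : (X.card : ℝ) ≤ (S.card : ℝ) := by exact_mod_cast this
    linarith
  have havg : (1 / 100 : ℝ) * avgDeg G' ≤ avgDegOn G' S := by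
    rw [hd]
    unfold avgDegOn
    rw [le_div_iff₀ hSpos]
    nlinarith [mul_nonneg hd0 (sub_nonneg.mpr hS2X)]
  have hcle : cruxSize (1 / 100) G' ≤ S.card := Nat.sInf_le ⟨S, rfl, havg⟩
  have hcleR : ((cruxSize (1 / 100) G' : ℕ) : ℝ) ≤ (S.card : ℝ) := by exact_mod_cast hcle
  linarith
end
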